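/- Let G be a finite simple connected graph with at least two vertices and diameter d(G), and let f be a minimum gradation greyscale of G. Then f̂(e) ≤ 1/d(G) for every edge e of G, and at least d(G) edges e of G satisfy f̂(e) = 1/d(G); equivalently, the first d(G) components of the minimum gradation vector of G are equal to 1/d(G). -/

import Mathlib

open SimpleGraph

/-- A greyscale of a graph on vertex set `V`: a map to `[0,1]` attaining both `0` and `1`. -/
def IsGreyscale {V : Type*} (f : V → ℝ) : Prop :=
  (∀ w, 0 ≤ f w ∧ f w ≤ 1) ∧ (∃ a, f a = 0) ∧ (∃ b, f b = 1)

/-- The grey tone of an edge: the absolute difference of the tones of its endpoints. -/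
noncomputable def greyTone {V : Type*} (f : V → ℝ) : Sym2 V → ℝ :=
  Sym2.lift ⟨fun a b => |f a - f b|, fun _ _ => abs_sub_comm _ _⟩

/-- The edge-colour-increase mapping `F(u,v) = |f u - f v| / d(u,v)` (and `0` on the diagonal). -/
noncomputable def ecim {V : Type*} (G : SimpleGraph V) (f : V → ℝ) (u v : V) : ℝ :=
  letI := Classical.dec (u = v)
  if u = v then 0 else |f u - f v| / (G.dist u v : ℝ)

/-- The support greyscale for antipodal vertices `u, v` of a graph of diameter `D`. -/
noncomputable def supportGreyscale {V : Type*} (G : SimpleGraph V) (u v : V) (D : ℕ)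
    (w : V) : ℝ :=
  ((G.dist w u : ℝ) - (G.dist w v : ℝ) + (D : ℝ)) / (2 * (D : ℝ))

/-- The gradation vector: the grey tones of all edges, sorted in decreasing order. -/
noncomputable def gradVec {V : Type*} [Fintype V] (G : SimpleGraph V) (f : V → ℝ) : List ℝ :=
  letI := Classical.decEq V
  letI : DecidableRel G.Adj := Classical.decRel _
  (G.edgeFinset.val.map (greyTone f)).sort (· ≥ ·)

/-- Lexicographic comparison of gradation vectors: `f` is smaller than or equal to `g`. -/
def GradLE {V : Type*} [Fintype V] (G : SimpleGraph V) (f g : V → ℝ) : Prop :=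
  gradVec G f = gradVec G g ∨ List.Lex (· < ·) (gradVec G f) (gradVec G g)

/-- A minimum gradation greyscale: a greyscale whose gradation vector is lexicographically
minimal among the gradation vectors of all greyscales. -/
def IsMinGradGreyscale {V : Type*} [Fintype V] (G : SimpleGraph V) (f : V → ℝ) : Prop :=
  IsGreyscale f ∧ ∀ g : V → ℝ, IsGreyscale g → GradLE G f g

/-!
Taking `u, v` at distance `D`, the support greyscale `w ↦ (d(w,u) - d(w,v) + D) / 2D` changes
by at most `1/D` along every edge, so by minimality no grey tone of `f` exceeds `1/D`.
On a shortest path from a vertex of tone `0` to one of tone `1`, at most `D` tones of at most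
`1/D` add up to at least `1`: the path has exactly `D` edges, each of tone exactly `1/D`.
-/

theorem List.Pairwise.forall_le_of_lex {α : Type*} [LinearOrder α] {l l' : List α} {c : α}
    (hl : l.Pairwise (· ≥ ·)) (hlex : l = l' ∨ List.Lex (· < ·) l l')
    (hc : ∀ y ∈ l', y ≤ c) : ∀ x ∈ l, x ≤ c := by
  intro x hx
  cases l with
  | nil => simp at hx
  | cons a t =>
    have hxa : x ≤ a := by
      rcases List.mem_cons.mp hx with rfl | hxt
      · exact le_rfl
      · exact List.rel_of_pairwise_cons hl hxt
    have hac : a ≤ c := by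
      rcases hlex with rfl | hlex
      · exact hc a List.mem_cons_self
      · cases hlex with
        | cons => exact hc a List.mem_cons_self
        | rel hab => exact hab.le.trans (hc _ List.mem_cons_self)
    exact hxa.trans hac

section Greyscale

variable {V : Type*} {G : SimpleGraph V}

lemma greyTone_mk (f : V → ℝ) (a b : V) : greyTone f s(a, b) = |f a - f b| := rfl

lemma mem_gradVec [Fintype V] {f : V → ℝ} {x : ℝ} :
    x ∈ gradVec G f ↔ ∃ e ∈ G.edgeSet, greyTone f e = x := by
  simp [gradVec]

lemma pairwise_gradVec [Fintype V] (G : SimpleGraph V) (f : V → ℝ) :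
    (gradVec G f).Pairwise (· ≥ ·) :=
  Multiset.pairwise_sort _ _

lemma GradLE.greyTone_le [Fintype V] {f g : V → ℝ} (h : GradLE G f g) {c : ℝ}
    (hg : ∀ e ∈ G.edgeSet, greyTone g e ≤ c) : ∀ e ∈ G.edgeSet, greyTone f e ≤ c := by
  intro e he
  refine (pairwise_gradVec G f).forall_le_of_lex h (fun y hy => ?_) _
    (mem_gradVec.mpr ⟨e, he, rfl⟩)
  obtain ⟨e', he', rfl⟩ := mem_gradVec.mp hy
  exact hg e' he'

lemma abs_sub_le_sum_greyTone (f : V → ℝ) {x y : V} (p : G.Walk x y) :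
    |f y - f x| ≤ (p.edges.map (greyTone f)).sum := by
  induction p with
  | nil => simp
  | @cons x x' y _ q ih =>
    rw [Walk.edges_cons, List.map_cons, List.sum_cons, greyTone_mk, abs_sub_comm (f x)]
    exact (abs_sub_le _ _ _).trans (by linarith)

lemma abs_sub_le_length_mul {f : V → ℝ} {x y : V} (p : G.Walk x y) {c : ℝ}
    (hc : ∀ e ∈ p.edges, greyTone f e ≤ c) : |f y - f x| ≤ p.length * c := by
  have hsum := List.sum_le_card_nsmul (p.edges.map (greyTone f)) c (by simpa using hc)
  rw [List.length_map, Walk.length_edges, nsmul_eq_mul] at hsum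
  exact (abs_sub_le_sum_greyTone f p).trans hsum

lemma SimpleGraph.Walk.IsPath.greyTone_eq_of_length_mul_le {f : V → ℝ} {x y : V}
    {p : G.Walk x y} (hp : p.IsPath) {c : ℝ} (hc : ∀ e ∈ p.edges, greyTone f e ≤ c)
    (h : p.length * c ≤ |f y - f x|) : ∀ e ∈ p.edges, greyTone f e = c := by
  classical
  have hnodup := hp.isTrail.edges_nodup
  have hsum : ∑ e ∈ p.edges.toFinset, greyTone f e = ∑ e ∈ p.edges.toFinset, c := by
    refine le_antisymm (Finset.sum_le_sum fun e he => hc e (List.mem_toFinset.mp he)) ?_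
    rw [Finset.sum_const, List.toFinset_card_of_nodup hnodup, Walk.length_edges, nsmul_eq_mul,
      List.sum_toFinset _ hnodup]
    exact h.trans (abs_sub_le_sum_greyTone f p)
  intro e he
  exact (Finset.sum_eq_sum_iff_of_le fun e he => hc e (List.mem_toFinset.mp he)).mp hsum e
    (List.mem_toFinset.mpr he)

lemma SimpleGraph.Walk.IsPath.length_le_ncard [Finite V] {x y : V}
    {p : G.Walk x y} (hp : p.IsPath) {P : Sym2 V → Prop} (hP : ∀ e ∈ p.edges, P e) :
    p.length ≤ {e ∈ G.edgeSet | P e}.ncard := by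
  classical
  calc p.length = (p.edges.toFinset : Set (Sym2 V)).ncard := by
        rw [Set.ncard_coe_finset, List.toFinset_card_of_nodup hp.isTrail.edges_nodup,
          Walk.length_edges]
    _ ≤ _ := by
      refine Set.ncard_le_ncard (fun e he => ?_)
      rw [Finset.mem_coe, List.mem_toFinset] at he
      exact ⟨p.edges_subset_edgeSet he, hP e he⟩

end Greyscale

section SupportGreyscale

variable {V : Type*} {G : SimpleGraph V}

lemma SimpleGraph.Connected.abs_dist_sub_dist_le_one (hG : G.Connected) {a b : V}
    (hab : G.Adj a b) (w : V) : |(G.dist a w : ℝ) - G.dist b w| ≤ 1 := by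
  have h₁ : G.dist a w ≤ G.dist a b + G.dist b w := hG.dist_triangle
  have h₂ : G.dist b w ≤ G.dist b a + G.dist a w := hG.dist_triangle
  rw [dist_eq_one_iff_adj.mpr hab] at h₁
  rw [dist_eq_one_iff_adj.mpr hab.symm] at h₂
  rw [abs_sub_le_iff]
  constructor <;> push_cast [← Nat.cast_le (α := ℝ)] at h₁ h₂ <;> linarith

lemma isGreyscale_supportGreyscale (hG : G.Connected) {u v : V} {D : ℕ} (huv : G.dist u v = D)
    (hD : 0 < D) : IsGreyscale (supportGreyscale G u v D) := by
  have hD' : (0 : ℝ) < D := by exact_mod_cast hD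
  refine ⟨fun w => ?_, ⟨u, ?_⟩, ⟨v, ?_⟩⟩
  · have h₁ : G.dist w v ≤ G.dist w u + G.dist u v := hG.dist_triangle
    have h₂ : G.dist w u ≤ G.dist w v + G.dist v u := hG.dist_triangle
    rw [dist_comm (u := v), huv] at h₂
    rw [huv] at h₁
    have h₁' : (G.dist w v : ℝ) ≤ G.dist w u + D := by exact_mod_cast h₁
    have h₂' : (G.dist w u : ℝ) ≤ G.dist w v + D := by exact_mod_cast h₂
    unfold supportGreyscale
    constructor
    · exact div_nonneg (by linarith) (by positivity)
    · rw [div_le_one (by positivity)]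
      linarith
  · simp [supportGreyscale, huv]
  · rw [supportGreyscale, dist_self, dist_comm, huv]
    field_simp
    ring

lemma greyTone_supportGreyscale_le (hG : G.Connected) (u v : V) (D : ℕ) :
    ∀ e ∈ G.edgeSet, greyTone (supportGreyscale G u v D) e ≤ 1 / D := by
  intro e he
  induction e using Sym2.ind with
  | _ a b =>
    have hu := hG.abs_dist_sub_dist_le_one he u
    have hv := hG.abs_dist_sub_dist_le_one he v
    have hdiff : supportGreyscale G u v D a - supportGreyscale G u v D b =
        (((G.dist a u : ℝ) - G.dist b u) - ((G.dist a v : ℝ) - G.dist b v)) / (2 * D) := by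
      simp only [supportGreyscale]
      ring
    rw [greyTone_mk, hdiff, abs_div, abs_of_nonneg (by positivity : (0 : ℝ) ≤ 2 * D)]
    calc _ ≤ 2 / (2 * (D : ℝ)) :=
          div_le_div_of_nonneg_right ((abs_sub _ _).trans (by linarith)) (by positivity)
      _ = 1 / D := by rw [div_mul_eq_div_div, div_self two_ne_zero]

end SupportGreyscale

theorem stmt_15_general {V : Type*} [Fintype V] (G : SimpleGraph V)
    (hG : G.Connected) (D : ℕ)
    (hDub : ∀ a b : V, G.dist a b ≤ D)
    (hDmax : ∃ a b : V, G.dist a b = D)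
    (f : V → ℝ) (hmin : IsMinGradGreyscale G f) :
    (∀ a b : V, G.Adj a b → |f a - f b| ≤ 1 / (D : ℝ)) ∧
    D ≤ {e ∈ G.edgeSet | greyTone f e = 1 / (D : ℝ)}.ncard := by
  obtain ⟨⟨-, ⟨a, ha⟩, ⟨b, hb⟩⟩, hf_min⟩ := hmin
  obtain ⟨u, v, huv⟩ := hDmax
  have hab : a ≠ b := by rintro rfl; linarith
  have hD : 0 < D := (hG.pos_dist_of_ne hab).trans_le (hDub a b)
  have hbound : ∀ e ∈ G.edgeSet, greyTone f e ≤ 1 / D :=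
    (hf_min _ (isGreyscale_supportGreyscale hG huv hD)).greyTone_le
      (greyTone_supportGreyscale_le hG u v D)
  refine ⟨fun x y hxy => hbound s(x, y) hxy, ?_⟩
  obtain ⟨p, hp, hlen⟩ := hG.exists_path_of_dist a b
  have hpbound : ∀ e ∈ p.edges, greyTone f e ≤ 1 / D :=
    fun e he => hbound e (p.edges_subset_edgeSet he)
  have hfab : |f b - f a| = 1 := by simp [ha, hb]
  have hlenD : p.length = D := by
    have hle := abs_sub_le_length_mul p hpbound
    rw [hfab, mul_one_div, one_le_div (by positivity)] at hle
    exact le_antisymm (hlen ▸ hDub a b) (by exact_mod_cast hle)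
  have htone := hp.greyTone_eq_of_length_mul_le hpbound (by
    rw [hfab, hlenD, mul_one_div_cancel (by positivity)])
  calc D = p.length := hlenD.symm
    _ ≤ _ := hp.length_le_ncard htone

theorem stmt_15 {V : Type*} [Fintype V] [Nontrivial V] (G : SimpleGraph V)
    (hG : G.Connected) (D : ℕ)
    (hDub : ∀ a b : V, G.dist a b ≤ D)
    (hDmax : ∃ a b : V, G.dist a b = D)
    (f : V → ℝ) (hmin : IsMinGradGreyscale G f) :
    (∀ a b : V, G.Adj a b → |f a - f b| ≤ 1 / (D : ℝ)) ∧
    D ≤ {e ∈ G.edgeSet | greyTone f e = 1 / (D : ℝ)}.ncard :=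
  stmt_15_general G hG D hDub hDmax f hmin
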